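/- arXiv:0710.5457 — 2 statements merged into one kernel-verified Lean document; each statement's English description precedes it below -/
import Mathlib

section
/- Let X be a Cubist subset of ℤ^r. Then ℤ^r is the disjoint union of the translates X[m] = {x + m(1,...,1) : x ∈ X} over all m ∈ ℤ. -/
/-!
Let `X = I \ I[-1]` with `I` a nonempty proper lower set. Along the diagonal line through `y`,
the levels `m` with `y - m(1,…,1) ∈ I` form an upper set of `ℤ`; it is nonempty because `I` is,
and bounded below because `I` misses a point. Hence it is a ray `[m₀, ∞)`, and `y ∈ X[m]` says
exactly that `m` lies in the ray while `m - 1` does not, i.e. `m = m₀`.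
-/

/-- The translate `S[ζ] = {x + ζ(1,...,1) : x ∈ S}`. -/
def trSet {r : ℕ} (S : Set (Fin r → ℤ)) (ζ : ℤ) : Set (Fin r → ℤ) :=
  (fun x => x + fun _ => ζ) '' S

/-- A Cubist subset of `ℤ^r`: `X = X⁻ \ X⁻[-1]` for a nonempty proper ideal `X⁻`. -/
def IsCubist {r : ℕ} (X : Set (Fin r → ℤ)) : Prop :=
  ∃ I : Set (Fin r → ℤ), I.Nonempty ∧ I ≠ Set.univ ∧ IsLowerSet I ∧ X = I \ trSet I (-1)

lemma Int.existsUnique_mem_and_sub_one_notMem {S : Set ℤ} (hS : IsUpperSet S)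
    (hne : S.Nonempty) (hbdd : BddBelow S) : ∃! m, m ∈ S ∧ m - 1 ∉ S := by
  have hmin : sInf S ∈ S := Int.csInf_mem hne hbdd
  refine ⟨sInf S, ⟨hmin, fun h => ?_⟩, fun m ⟨hm, hm'⟩ => ?_⟩
  · linarith [csInf_le hbdd h]
  · have hle : sInf S ≤ m := csInf_le hbdd hm
    by_contra hm_ne
    exact hm' (hS (show sInf S ≤ m - 1 by omega) hmin)

section Diagonal

variable {ι : Type*} {I : Set (ι → ℤ)}

lemma IsLowerSet.isUpperSet_setOf_sub_const (hI : IsLowerSet I) (y : ι → ℤ) :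
    IsUpperSet {m : ℤ | y - (fun _ => m) ∈ I} :=
  fun _ _ hmn hm => hI (fun _ => by simp only [Pi.sub_apply]; omega) hm

lemma IsLowerSet.nonempty_setOf_sub_const [Finite ι] (hI : IsLowerSet I) (hne : I.Nonempty)
    (y : ι → ℤ) : {m : ℤ | y - (fun _ => m) ∈ I}.Nonempty := by
  obtain ⟨a, ha⟩ := hne
  obtain ⟨M, hM⟩ := Finite.exists_le (y - a)
  exact ⟨M, hI (fun i => by have := hM i; simp only [Pi.sub_apply] at this ⊢; omega) ha⟩

lemma IsLowerSet.bddBelow_setOf_sub_const [Finite ι] (hI : IsLowerSet I) (hne : I ≠ Set.univ)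
    (y : ι → ℤ) : BddBelow {m : ℤ | y - (fun _ => m) ∈ I} := by
  obtain ⟨b, hb⟩ := (Set.ne_univ_iff_exists_notMem I).mp hne
  obtain ⟨N, hN⟩ := Finite.exists_le (b - y)
  refine ⟨-N, fun m hm => ?_⟩
  by_contra! hlt
  exact hb (hI (fun i => by have := hN i; simp only [Pi.sub_apply] at this ⊢; omega) hm)

end Diagonal

lemma mem_trSet {r : ℕ} {S : Set (Fin r → ℤ)} {ζ : ℤ} {y : Fin r → ℤ} :
    y ∈ trSet S ζ ↔ (y - fun _ => ζ) ∈ S := by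
  constructor
  · rintro ⟨x, hx, rfl⟩
    simpa using hx
  · intro h
    exact ⟨_, h, by simp⟩

lemma mem_trSet_sdiff_trSet_neg_one {r : ℕ} {I : Set (Fin r → ℤ)} {y : Fin r → ℤ} {m : ℤ} :
    y ∈ trSet (I \ trSet I (-1)) m ↔ (y - fun _ => m) ∈ I ∧ (y - fun _ => m - 1) ∉ I := by
  have hshift : ((y - fun _ => m) - fun _ => (-1 : ℤ)) = y - fun _ => m - 1 := by
    funext i; simp only [Pi.sub_apply]; ring
  rw [mem_trSet, Set.mem_sdiff, mem_trSet, hshift]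

/-- `ℤ^r` is the disjoint union of the translates `X[m]`, `m ∈ ℤ`:
every point lies in exactly one translate. -/
theorem cubist_partition (r : ℕ) (X : Set (Fin r → ℤ)) (hX : IsCubist X)
    (y : Fin r → ℤ) : ∃! m : ℤ, y ∈ trSet X m := by
  obtain ⟨I, hne, hproper, hlow, rfl⟩ := hX
  simp only [mem_trSet_sdiff_trSet_neg_one]
  exact Int.existsUnique_mem_and_sub_one_notMem (hlow.isUpperSet_setOf_sub_const y)
    (hlow.nonempty_setOf_sub_const hne y) (hlow.bddBelow_setOf_sub_const hproper y)
end

section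
/- Let X be a Cubist subset of ℤ^r and x ∈ X a flat element with witness index i = i(x) (so x + ε_i ∉ X and x − ε_i ∉ X). Then for all j ≠ i we have both x + ε_j ∈ X and x − ε_j ∈ X. -/
/-- The model facet `F_i = {∑_{j<i} a_j ε_j - ∑_{j>i} a_j ε_j : a_j ∈ {0,1}}`
(indices `0`-based). -/
def FacetAt {r : ℕ} (i : Fin r) : Set (Fin r → ℤ) :=
  {z | z i = 0 ∧ ∀ j : Fin r, (j < i → (z j = 0 ∨ z j = 1)) ∧ (i < j → (z j = 0 ∨ z j = -1))}

/-- The model cone `C_i = ℤ_{≤0}^{i-1} × ℤ × ℤ_{≥0}^{r-i}` (indices `0`-based). -/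
def ConeAt {r : ℕ} (i : Fin r) : Set (Fin r → ℤ) :=
  {z | (∀ j : Fin r, j < i → z j ≤ 0) ∧ (∀ j : Fin r, i < j → 0 ≤ z j)}

/-- The point `x + ε_1 + ... + ε_{i}` (0-based: sum of the first `i` basis vectors). -/
def prefixPt {r : ℕ} (x : Fin r → ℤ) (i : Fin r) : Fin r → ℤ :=
  fun j => x j + if j < i then 1 else 0

/-- `i` is the largest index such that `x + ε_1 + ... + ε_{i-1} ∈ X`. -/
def IsMaxIdx {r : ℕ} (X : Set (Fin r → ℤ)) (x : Fin r → ℤ) (i : Fin r) : Prop :=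
  prefixPt x i ∈ X ∧ ∀ j : Fin r, prefixPt x j ∈ X → j ≤ i

lemma mem_trSet_neg_one_iff {r : ℕ} {S : Set (Fin r → ℤ)} {y : Fin r → ℤ} :
    y ∈ trSet S (-1) ↔ y + 1 ∈ S := by
  constructor
  · rintro ⟨z, hz, rfl⟩
    convert hz using 1
    ext
    simp
  · exact fun h => ⟨y + 1, h, by ext; simp⟩

lemma mem_sdiff_trSet_neg_one_iff {r : ℕ} {S : Set (Fin r → ℤ)} {y : Fin r → ℤ} :
    y ∈ S \ trSet S (-1) ↔ y ∈ S ∧ y + 1 ∉ S := by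
  rw [Set.mem_sdiff, mem_trSet_neg_one_iff]

section SingleOrder

variable {ι : Type*} [DecidableEq ι]

lemma single_le_one_sub_single {i j : ι} (hji : j ≠ i) :
    (Pi.single j 1 : ι → ℤ) ≤ 1 - Pi.single i 1 := by
  intro k
  rcases eq_or_ne k j with rfl | hkj
  · simp [hji]
  · simp only [Pi.single_apply, hkj, if_false, Pi.sub_apply, Pi.one_apply]
    split <;> simp

lemma add_single_le_sub_single_add_one (x : ι → ℤ) {i j : ι} (hji : j ≠ i) :
    x + Pi.single j 1 ≤ x - Pi.single i 1 + 1 := by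
  rw [sub_add_eq_add_sub, add_sub_assoc]
  exact add_le_add_right (single_le_one_sub_single hji) x

lemma add_one_le_add_single_add_one (x : ι → ℤ) (i : ι) :
    x + 1 ≤ x + Pi.single i 1 + 1 := by
  gcongr
  exact le_add_of_nonneg_right (Pi.single_nonneg.2 zero_le_one)

lemma sub_single_le (x : ι → ℤ) (i : ι) : x - Pi.single i 1 ≤ x :=
  sub_le_self x (Pi.single_nonneg.2 zero_le_one)

end SingleOrder

/-- if `x ∈ X` is flat with witness index `i` (so `x ± ε_i ∉ X`), then
for every `j ≠ i`, both `x + ε_j ∈ X` and `x - ε_j ∈ X`. -/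
theorem flat_neighbours (r : ℕ) (X : Set (Fin r → ℤ)) (hX : IsCubist X)
    (x : Fin r → ℤ) (hx : x ∈ X) (i : Fin r)
    (h1 : x + Pi.single i 1 ∉ X) (h2 : x - Pi.single i 1 ∉ X) :
    ∀ j : Fin r, j ≠ i → x + Pi.single j 1 ∈ X ∧ x - Pi.single j 1 ∈ X := by
  obtain ⟨I, -, -, hI, rfl⟩ := hX
  simp only [mem_sdiff_trSet_neg_one_iff, not_and, not_not] at hx h1 h2 ⊢
  obtain ⟨hxI, hx1⟩ := hx
  have hi_add : x + Pi.single i 1 ∉ I := fun h =>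
    hx1 (hI (add_one_le_add_single_add_one x i) (h1 h))
  have hi_sub : x - Pi.single i 1 + 1 ∈ I := h2 (hI (sub_single_le x i) hxI)
  intro j hji
  refine ⟨⟨hI (add_single_le_sub_single_add_one x hji) hi_sub, fun h => ?_⟩,
    ⟨hI (sub_single_le x j) hxI, fun h => ?_⟩⟩
  · exact hx1 (hI (add_one_le_add_single_add_one x j) h)
  · exact hi_add (hI (add_single_le_sub_single_add_one x hji.symm) h)
end
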